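/- With the notation of the resultant interpolation setting (p of degree n, q of degree m, N = m+n+1 distinct nodes with p(x_j)q(x_j) ≠ 0, τ̃_k = ∑_j (q(x_j)/p(x_j)) x_j^k / W'(x_j)), the Hankel determinants satisfy H_{n+1}({τ̃}) = (q_0/p_0) · H_n({τ̃}); in particular H_{n+1}({τ̃}) = ((−1)^{mn+n(n+1)/2} q_0 / ∏_{j=1}^N p(x_j)) · Res(p, q). -/

import Mathlib

open Finset Polynomial

/-- `Wd x j = ∏_{i ≠ j} (x j - x i)`, i.e. `W'(x_j)` where `W(x) = ∏ (x - x_i)`. -/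
noncomputable def Wd {N : ℕ} (x : Fin N → ℂ) (j : Fin N) : ℂ :=
  ∏ i ∈ Finset.univ.erase j, (x j - x i)

/-- The `k`-th Hankel determinant of the sequence `{c_j}`. -/
noncomputable def Hdet (c : ℕ → ℂ) (k : ℕ) : ℂ :=
  Matrix.det (Matrix.of fun i j : Fin k => c ((i : ℕ) + (j : ℕ)))

/-- The resultant of `p` and `q` over `ℂ`:
`Res(p,q) = p₀^m ∏ q(λ)` over the roots `λ` of `p` counted with multiplicity. -/
noncomputable def Res (p q : Polynomial ℂ) : ℂ :=
  p.leadingCoeff ^ q.natDegree * (p.roots.map fun l => q.eval l).prod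

/-!
Write `p = p₀ ∏ₗ (X - aₗ)`. If the roots `aₗ` are distinct and differ from the nodes `xⱼ`,
Lagrange's formula for the top coefficient on the enlarged node family `(x, a)`, applied to `q Xᵏ`,
shows `τ̃ₖ = ∑ₗ dₗ aₗᵏ + [k = 2n] q₀ / p₀` for `k ≤ 2n`. The Hankel matrix of `∑ₗ dₗ aₗᵏ` is
`Vᵀ diag(d) V` with `V` of Vandermonde type and rank at most `n`, so the `(n+1)`-st determinant
only sees the corner correction `q₀ / p₀`, while the `n`-th is `Δ(a)² ∏ₗ dₗ`; this product of
weights is the resultant up to the stated factor. Both identities depend continuously on `a` on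
the open set where `a` avoids the nodes, and vectors with distinct entries are dense there, which
removes the assumption that the roots are simple.
-/

theorem hdet_congr {s s' : ℕ → ℂ} {K : ℕ} (h : ∀ k, k + 2 ≤ 2 * K → s k = s' k) :
    Hdet s K = Hdet s' K := by
  unfold Hdet
  congr 1
  ext i j
  exact h _ (by omega)

theorem hdet_add_single_succ (s : ℕ → ℂ) (n : ℕ) (c : ℂ) :
    Hdet (s + Pi.single (2 * n) c) (n + 1) = Hdet s (n + 1) + c * Hdet s n := by
  set M := Matrix.of fun i j : Fin (n + 1) => s (i + j)
  set M' := Matrix.of fun i j : Fin (n + 1) => (s + Pi.single (2 * n) c : ℕ → ℂ) (i + j)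
  have hminor : ∀ i : Fin (n + 1), M'.submatrix i.succAbove (Fin.last n).succAbove =
      M.submatrix i.succAbove (Fin.last n).succAbove := by
    intro i
    ext k l
    have := (i.succAbove k).isLt
    have := l.isLt
    simp only [M, M', Matrix.submatrix_apply, Matrix.of_apply, Fin.succAbove_last, Pi.add_apply,
      Pi.single_apply, Fin.val_castSucc, add_eq_left, ite_eq_right_iff]
    omega
  have hcol : ∀ i : Fin n, M' i.castSucc (Fin.last n) = M i.castSucc (Fin.last n) := by
    intro i
    have := i.isLt
    simp only [M, M', Matrix.of_apply, Pi.add_apply, Pi.single_apply, Fin.val_castSucc,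
      Fin.val_last, add_eq_left, ite_eq_right_iff]
    omega
  have hcorner : M' (Fin.last n) (Fin.last n) = M (Fin.last n) (Fin.last n) + c := by
    simp [M, M', two_mul]
  have hlast : M.submatrix (Fin.last n).succAbove (Fin.last n).succAbove =
      Matrix.of fun i j : Fin n => s (i + j) := by
    ext i j
    simp [M]
  unfold Hdet
  rw [Matrix.det_succ_column M' (Fin.last n), Matrix.det_succ_column M (Fin.last n),
    Fin.sum_univ_castSucc, Fin.sum_univ_castSucc]
  simp only [hminor, hcol, hcorner, hlast, Fin.val_last, ← two_mul, pow_mul, neg_one_sq, one_pow]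
  ring

theorem hankel_powerSum_eq_transpose_mul_diagonal_mul {n : ℕ} (K : ℕ) (a d : Fin n → ℂ) :
    Matrix.of (fun i j : Fin K => ∑ l, d l * a l ^ ((i : ℕ) + j)) =
      (Matrix.of fun l (i : Fin K) => a l ^ (i : ℕ)).transpose * Matrix.diagonal d *
        Matrix.of fun l (i : Fin K) => a l ^ (i : ℕ) := by
  ext i j
  rw [Matrix.mul_apply]
  simp only [Matrix.mul_diagonal, Matrix.of_apply, Matrix.transpose_apply, pow_add]
  exact sum_congr rfl fun l _ => by ring

theorem hdet_powerSum_eq_zero {n K : ℕ} (h : n < K) (a d : Fin n → ℂ) :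
    Hdet (fun k => ∑ l, d l * a l ^ k) K = 0 := by
  set V : Matrix (Fin n) (Fin K) ℂ := Matrix.of fun l i => a l ^ (i : ℕ)
  by_contra hdet
  rw [Hdet, hankel_powerSum_eq_transpose_mul_diagonal_mul] at hdet
  have hrank : (V.transpose * Matrix.diagonal d * V).rank = K := by
    rw [Matrix.rank_of_isUnit _ ((Matrix.isUnit_iff_isUnit_det _).2 (Ne.isUnit hdet)),
      Fintype.card_fin]
  have := (Matrix.rank_mul_le_left _ V).trans
    (Matrix.rank_le_width (V.transpose * Matrix.diagonal d))
  omega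

theorem hdet_powerSum {n : ℕ} (a d : Fin n → ℂ) :
    Hdet (fun k => ∑ l, d l * a l ^ k) n = (∏ i, ∏ j ∈ Ioi i, (a j - a i)) ^ 2 * ∏ l, d l := by
  unfold Hdet
  rw [hankel_powerSum_eq_transpose_mul_diagonal_mul, Matrix.det_mul, Matrix.det_mul,
    Matrix.det_transpose, Matrix.det_diagonal, ← Matrix.vandermonde, Matrix.det_vandermonde]
  ring

theorem prod_univ_erase_inl {M ι κ : Type*} [CommMonoid M] [Fintype ι] [Fintype κ]
    [DecidableEq ι] [DecidableEq κ] (f : ι ⊕ κ → M) (i : ι) :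
    ∏ w ∈ univ.erase (Sum.inl i), f w =
      (∏ i' ∈ univ.erase i, f (Sum.inl i')) * ∏ l, f (Sum.inr l) := by
  rw [← prod_disjSum]
  congr 1
  ext (_ | _) <;> simp

theorem prod_univ_erase_inr {M ι κ : Type*} [CommMonoid M] [Fintype ι] [Fintype κ]
    [DecidableEq ι] [DecidableEq κ] (f : ι ⊕ κ → M) (l : κ) :
    ∏ w ∈ univ.erase (Sum.inr l), f w =
      (∏ i, f (Sum.inl i)) * ∏ l' ∈ univ.erase l, f (Sum.inr l') := by
  rw [← prod_disjSum]
  congr 1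
  ext (_ | _) <;> simp

theorem coeff_eq_sum_add_sum_of_injective_sumElim {K ι κ : Type*} [Field K] [Fintype ι]
    [Fintype κ] [DecidableEq ι] [DecidableEq κ] {x : ι → K} {a : κ → K}
    (hxa : Function.Injective (Sum.elim x a)) {f : K[X]}
    (hf : f.degree < ↑(Fintype.card ι + Fintype.card κ)) :
    f.coeff (Fintype.card ι + Fintype.card κ - 1) =
      ∑ i, f.eval (x i) / ((∏ i' ∈ univ.erase i, (x i - x i')) * ∏ l, (x i - a l)) +
        ∑ l, f.eval (a l) / ((∏ i, (a l - x i)) * ∏ l' ∈ univ.erase l, (a l - a l')) := by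
  have h := Lagrange.coeff_eq_sum (s := univ) hxa.injOn (by simpa using hf)
  simp only [card_univ, Fintype.card_sum, Fintype.sum_sum_type] at h
  simpa only [prod_univ_erase_inl, prod_univ_erase_inr, Sum.elim_inl, Sum.elim_inr] using h

theorem coeff_mul_X_pow_natDegree_add {q : ℂ[X]} {n k : ℕ} (hk : k ≤ 2 * n) :
    (q * X ^ k).coeff (q.natDegree + 2 * n) = if k = 2 * n then q.leadingCoeff else 0 := by
  rw [coeff_mul_X_pow', if_pos (by omega)]
  split_ifs with h
  · rw [h, Nat.add_sub_cancel, leadingCoeff]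
  · exact coeff_eq_zero_of_natDegree_lt (by omega)

theorem sum_card_Ioi_fin (n : ℕ) : ∑ i : Fin n, #(Ioi i) = n * (n - 1) / 2 := by
  simp_rw [Fin.card_Ioi]
  rw [Fin.sum_univ_eq_sum_range (fun i => n - 1 - i), sum_range_reflect (fun i => i) n,
    sum_range_id]

theorem prod_prod_erase_sub {R : Type*} [CommRing R] {n : ℕ} (a : Fin n → R) :
    ∏ l, ∏ l' ∈ univ.erase l, (a l - a l') =
      (-1) ^ (n * (n - 1) / 2) * (∏ i, ∏ j ∈ Ioi i, (a j - a i)) ^ 2 := by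
  have h := prod_prod_Ioi_mul_eq_prod_prod_off_diag fun j i => a i - a j
  simp only [compl_singleton] at h
  rw [← h, ← sum_card_Ioi_fin, ← prod_pow_eq_pow_sum, ← prod_pow, ← prod_mul_distrib]
  refine prod_congr rfl fun i _ => ?_
  rw [← prod_pow, ← prod_neg]
  exact prod_congr rfl fun j _ => by ring

theorem prod_mul_prod_sub_swap {N n : ℕ} (p0 : ℂ) (x : Fin N → ℂ) (a : Fin n → ℂ) :
    ∏ j, p0 * ∏ l, (x j - a l) = p0 ^ N * ((-1) ^ (N * n) * ∏ l, ∏ j, (a l - x j)) := by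
  rw [prod_mul_distrib, prod_const, card_univ, Fintype.card_fin, prod_comm]
  congr 1
  simp_rw [← neg_sub (a _), prod_neg, card_univ, Fintype.card_fin]
  rw [prod_mul_distrib, prod_const, card_univ, Fintype.card_fin, ← pow_mul]

theorem neg_one_pow_resultant_sign (m n : ℕ) :
    (-1 : ℂ) ^ (m * n + n * (n + 1) / 2) =
      (-1) ^ (n + n * (n - 1) / 2) * (-1) ^ ((m + n + 1) * n) := by
  have h : n * (n + 1) / 2 = n + n * (n - 1) / 2 := by
    rcases n with _ | n
    · rfl
    · rw [Nat.add_sub_cancel, show (n + 1) * (n + 1 + 1) = (n + 1) * n + (n + 1) * 2 by ring,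
        Nat.add_mul_div_right _ _ two_pos]
      ring
  rw [h, ← pow_add, show n + n * (n - 1) / 2 + (m + n + 1) * n =
      m * n + (n + n * (n - 1) / 2) + n * (n + 1) by ring, pow_add _ _ (n * (n + 1)),
    (Nat.even_mul_succ_self n).neg_one_pow, mul_one]

/-- The sequence `τ̃` for `p = p0 * ∏ l, (X - C (a l))`, as a function of the roots `a`. -/
noncomputable def tauOfRoots {N n : ℕ} (p0 : ℂ) (q : ℂ[X]) (x : Fin N → ℂ) (a : Fin n → ℂ)
    (k : ℕ) : ℂ :=
  ∑ j, q.eval (x j) / (p0 * ∏ l, (x j - a l)) * x j ^ k / Wd x j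

noncomputable def rootWeight {N n : ℕ} (p0 : ℂ) (q : ℂ[X]) (x : Fin N → ℂ) (a : Fin n → ℂ)
    (l : Fin n) : ℂ :=
  -q.eval (a l) / (p0 * ((∏ j, (a l - x j)) * ∏ l' ∈ univ.erase l, (a l - a l')))

section DistinctRoots

variable {m n : ℕ} {p0 : ℂ} {q : ℂ[X]} {x : Fin (m + n + 1) → ℂ} {a : Fin n → ℂ}

theorem tauOfRoots_eq (hp0 : p0 ≠ 0) (hq : q.natDegree = m)
    (hxa : Function.Injective (Sum.elim x a)) {k : ℕ} (hk : k ≤ 2 * n) :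
    tauOfRoots p0 q x a k =
      ∑ l, rootWeight p0 q x a l * a l ^ k + if k = 2 * n then q.leadingCoeff / p0 else 0 := by
  have hdeg : (q * X ^ k).degree < ↑(Fintype.card (Fin (m + n + 1)) + Fintype.card (Fin n)) := by
    rw [degree_mul_X_pow]
    refine (add_le_add_left degree_le_natDegree _).trans_lt ?_
    rw [hq, Fintype.card_fin, Fintype.card_fin]
    exact_mod_cast (by omega : m + k < m + n + 1 + n)
  have h := coeff_eq_sum_add_sum_of_injective_sumElim hxa hdeg
  rw [Fintype.card_fin, Fintype.card_fin, show m + n + 1 + n - 1 = q.natDegree + 2 * n by omega,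
    coeff_mul_X_pow_natDegree_add hk] at h
  simp only [eval_mul, eval_pow, eval_X] at h
  have hnodes : ∑ j, q.eval (x j) * x j ^ k /
      ((∏ j' ∈ univ.erase j, (x j - x j')) * ∏ l, (x j - a l)) = p0 * tauOfRoots p0 q x a k := by
    rw [tauOfRoots, mul_sum]
    refine sum_congr rfl fun j _ => ?_
    rw [Wd]
    field_simp
  have hroots : ∑ l, q.eval (a l) * a l ^ k /
      ((∏ j, (a l - x j)) * ∏ l' ∈ univ.erase l, (a l - a l')) =
      -(p0 * ∑ l, rootWeight p0 q x a l * a l ^ k) := by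
    rw [mul_sum, ← sum_neg_distrib]
    refine sum_congr rfl fun l _ => ?_
    rw [rootWeight]
    field_simp
  rw [hnodes, hroots, ← sub_eq_add_neg, ← mul_sub, eq_comm, mul_comm, ← eq_div_iff hp0] at h
  rw [← sub_eq_iff_eq_add', h]
  split_ifs <;> simp

theorem hdet_tauOfRoots_eq_hdet_powerSum (hp0 : p0 ≠ 0) (hq : q.natDegree = m)
    (hxa : Function.Injective (Sum.elim x a)) :
    Hdet (tauOfRoots p0 q x a) n = Hdet (fun k => ∑ l, rootWeight p0 q x a l * a l ^ k) n :=
  hdet_congr fun k hk => by rw [tauOfRoots_eq hp0 hq hxa (by omega), if_neg (by omega), add_zero]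

theorem hdet_tauOfRoots_succ (hp0 : p0 ≠ 0) (hq : q.natDegree = m)
    (hxa : Function.Injective (Sum.elim x a)) :
    Hdet (tauOfRoots p0 q x a) (n + 1) =
      q.leadingCoeff / p0 * Hdet (tauOfRoots p0 q x a) n := by
  set s : ℕ → ℂ := fun k => ∑ l, rootWeight p0 q x a l * a l ^ k
  have hsucc : Hdet (tauOfRoots p0 q x a) (n + 1) =
      Hdet (s + Pi.single (2 * n) (q.leadingCoeff / p0)) (n + 1) :=
    hdet_congr fun k hk => by
      rw [tauOfRoots_eq hp0 hq hxa (by omega), Pi.add_apply, Pi.single_apply]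
  rw [hsucc, hdet_tauOfRoots_eq_hdet_powerSum hp0 hq hxa, hdet_add_single_succ,
    hdet_powerSum_eq_zero (Nat.lt_succ_self n), zero_add]

theorem prod_prod_sub_ne_zero (hxa : Function.Injective (Sum.elim x a)) :
    ∏ l, ∏ j, (a l - x j) ≠ 0 :=
  prod_ne_zero_iff.2 fun _ _ => prod_ne_zero_iff.2 fun _ _ =>
    sub_ne_zero.2 fun h => Sum.inr_ne_inl (hxa h)

theorem hdet_tauOfRoots (hp0 : p0 ≠ 0) (hq : q.natDegree = m)
    (hxa : Function.Injective (Sum.elim x a)) :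
    Hdet (tauOfRoots p0 q x a) n =
      (-1) ^ (n + n * (n - 1) / 2) * (∏ l, q.eval (a l)) / (p0 ^ n * ∏ l, ∏ j, (a l - x j)) := by
  have hΔ : ∏ i, ∏ j ∈ Ioi i, (a j - a i) ≠ 0 := by
    rw [← Matrix.det_vandermonde]
    exact Matrix.det_vandermonde_ne_zero_iff.2 (hxa.comp Sum.inr_injective)
  have hax := prod_prod_sub_ne_zero hxa
  have hsq : ((-1 : ℂ) ^ (n * (n - 1) / 2)) ^ 2 = 1 := by
    rw [← pow_mul, mul_comm, pow_mul, neg_one_sq, one_pow]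
  rw [hdet_tauOfRoots_eq_hdet_powerSum hp0 hq hxa, hdet_powerSum]
  simp only [rootWeight]
  rw [prod_div_distrib, prod_neg, prod_mul_distrib, prod_mul_distrib, prod_const,
    prod_prod_erase_sub, card_univ, Fintype.card_fin]
  field_simp
  rw [pow_add]
  linear_combination (-(-1) ^ n * ∏ l, q.eval (a l)) * hsq

theorem hdet_tauOfRoots_succ_eq (hp0 : p0 ≠ 0) (hq : q.natDegree = m)
    (hxa : Function.Injective (Sum.elim x a)) :
    Hdet (tauOfRoots p0 q x a) (n + 1) =
      (-1) ^ (m * n + n * (n + 1) / 2) * q.leadingCoeff / (∏ j, p0 * ∏ l, (x j - a l)) *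
        (p0 ^ m * ∏ l, q.eval (a l)) := by
  have hax := prod_prod_sub_ne_zero hxa
  rw [hdet_tauOfRoots_succ hp0 hq hxa, hdet_tauOfRoots hp0 hq hxa, prod_mul_prod_sub_swap,
    neg_one_pow_resultant_sign]
  field_simp
  ring

end DistinctRoots

theorem dense_setOf_injective (n : ℕ) : Dense {a : Fin n → ℂ | Function.Injective a} := by
  intro a
  set c : Fin n → ℂ := fun l => (l : ℕ)
  have hc : Function.Injective c := Nat.cast_injective.comp Fin.val_injective
  -- `a + ε • c` can only fail to be injective at one value of `ε` per pair of indices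
  set bad : Set ℂ := Set.range fun ll : Fin n × Fin n => (a ll.2 - a ll.1) / (c ll.1 - c ll.2)
  have hgood : Set.MapsTo (fun ε : ℂ => a + ε • c) badᶜ {a | Function.Injective a} := by
    intro ε hε l l' h
    by_contra hne
    refine hε ⟨(l, l'), ?_⟩
    have hcc : c l - c l' ≠ 0 := sub_ne_zero.2 (hc.ne hne)
    simp only [Pi.add_apply, Pi.smul_apply, smul_eq_mul] at h
    field_simp
    linear_combination -h
  simpa using map_mem_closure (by fun_prop) ((Set.finite_range _).countable.dense_compl ℂ 0) hgood

theorem continuousOn_hdet {X : Type*} [TopologicalSpace X] {s : X → ℕ → ℂ} {U : Set X}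
    (h : ∀ k, ContinuousOn (fun a => s a k) U) (K : ℕ) :
    ContinuousOn (fun a => Hdet (s a) K) U :=
  continuous_id.matrix_det.comp_continuousOn <|
    continuousOn_pi.2 fun _ => continuousOn_pi.2 fun _ => h _

theorem continuousOn_tauOfRoots {N n : ℕ} {p0 : ℂ} (hp0 : p0 ≠ 0) (q : ℂ[X]) (x : Fin N → ℂ)
    (k : ℕ) :
    ContinuousOn (fun a : Fin n → ℂ => tauOfRoots p0 q x a k) {a | ∀ l j, a l ≠ x j} := by
  refine continuousOn_finsetSum _ fun j _ => ?_
  refine ((continuousOn_const.div (by fun_prop) fun a ha => ?_).mul continuousOn_const).div_const _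
  exact mul_ne_zero hp0 (prod_ne_zero_iff.2 fun l _ => sub_ne_zero.2 (ha l j).symm)

theorem hdet_tauOfRoots_succ_eq_and_eq {m n : ℕ} {p0 : ℂ} (hp0 : p0 ≠ 0) {q : ℂ[X]}
    (hq : q.natDegree = m) {x : Fin (m + n + 1) → ℂ} (hx : Function.Injective x) {a : Fin n → ℂ}
    (hax : ∀ l j, a l ≠ x j) :
    Hdet (tauOfRoots p0 q x a) (n + 1) = q.leadingCoeff / p0 * Hdet (tauOfRoots p0 q x a) n ∧
    Hdet (tauOfRoots p0 q x a) (n + 1) =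
      (-1) ^ (m * n + n * (n + 1) / 2) * q.leadingCoeff / (∏ j, p0 * ∏ l, (x j - a l)) *
        (p0 ^ m * ∏ l, q.eval (a l)) := by
  set U : Set (Fin n → ℂ) := {a | ∀ l j, a l ≠ x j}
  have hU : IsOpen U := by
    simp only [U, Set.ofPred_forall]
    exact isOpen_iInter_of_finite fun l => isOpen_iInter_of_finite fun j =>
      isOpen_ne_fun (continuous_apply l) continuous_const
  have hclosure : U ⊆ closure (U ∩ {a | Function.Injective a}) :=
    (dense_setOf_injective n).open_subset_closure_inter hU
  have hinj : ∀ a ∈ U ∩ {a | Function.Injective a}, Function.Injective (Sum.elim x a) :=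
    fun a ha => hx.sumElim ha.2 fun j l => (ha.1 l j).symm
  have hτ := continuousOn_hdet (continuousOn_tauOfRoots (n := n) hp0 q x)
  have hprod_ne : ∀ a ∈ U, ∏ j, p0 * ∏ l, (x j - a l) ≠ 0 := fun a ha =>
    prod_ne_zero_iff.2 fun j _ =>
      mul_ne_zero hp0 (prod_ne_zero_iff.2 fun l _ => sub_ne_zero.2 (ha l j).symm)
  refine ⟨Set.EqOn.of_subset_closure (fun a ha => hdet_tauOfRoots_succ hp0 hq (hinj a ha))
      (hτ _) (continuousOn_const.mul (hτ _)) Set.inter_subset_left hclosure hax,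
    Set.EqOn.of_subset_closure (fun a ha => hdet_tauOfRoots_succ_eq hp0 hq (hinj a ha))
      (hτ _) ?_ Set.inter_subset_left hclosure hax⟩
  exact (continuousOn_const.div (by fun_prop) hprod_ne).mul (by fun_prop)

theorem Multiset.exists_univ_val_map_eq {α : Type*} (s : Multiset α) {n : ℕ}
    (hs : Multiset.card s = n) : ∃ a : Fin n → α, univ.val.map a = s := by
  subst hs
  rcases s with ⟨l⟩
  exact ⟨l.get, (Fin.univ_val_map _).trans (congrArg _ (List.ofFn_get l))⟩

theorem exists_eval_eq_mul_prod_sub_and_res_eq (p q : ℂ[X]) :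
    ∃ a : Fin p.natDegree → ℂ, (∀ z, p.eval z = p.leadingCoeff * ∏ l, (z - a l)) ∧
      Res p q = p.leadingCoeff ^ q.natDegree * ∏ l, q.eval (a l) := by
  obtain ⟨a, ha⟩ := p.roots.exists_univ_val_map_eq IsAlgClosed.card_roots_eq_natDegree
  refine ⟨a, fun z => ?_, ?_⟩
  · conv_lhs =>
      rw [← C_leadingCoeff_mul_prod_multiset_X_sub_C (p := p) IsAlgClosed.card_roots_eq_natDegree]
    rw [← ha, Multiset.map_map, ← prod_eq_multiset_prod]
    simp [eval_prod]
  · simp [Res, ← ha, prod_eq_multiset_prod, Function.comp_def]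

theorem hankel_det_succ_eq_resultant_general (n m N : ℕ) (hN : N = m + n + 1)
    (p q : Polynomial ℂ) (hpdeg : p.natDegree = n) (hqdeg : q.natDegree = m)
    (hp0 : p.leadingCoeff ≠ 0)
    (x : Fin N → ℂ) (hx : Function.Injective x)
    (hpx : ∀ j, p.eval (x j) ≠ 0)
    (t : ℕ → ℂ)
    (ht : ∀ k, t k = ∑ j, (q.eval (x j) / p.eval (x j)) * x j ^ k / Wd x j) :
    Hdet t (n + 1) = q.leadingCoeff / p.leadingCoeff * Hdet t n ∧
    Hdet t (n + 1) =
      (-1 : ℂ) ^ (m * n + n * (n + 1) / 2) * q.leadingCoeff /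
          (∏ j, p.eval (x j)) * Res p q := by
  subst hN hpdeg
  obtain ⟨a, hpa, hRes⟩ := exists_eval_eq_mul_prod_sub_and_res_eq p q
  have hax : ∀ l j, a l ≠ x j := fun l j h => hpx j <| by
    rw [hpa, prod_eq_zero (mem_univ l) (by rw [h, sub_self]), mul_zero]
  have htau : t = tauOfRoots p.leadingCoeff q x a := funext fun k => by
    simp only [ht, tauOfRoots, hpa]
  rw [htau, hRes, hqdeg]
  simp only [hpa]
  exact hdet_tauOfRoots_succ_eq_and_eq hp0 hqdeg hx hax

theorem hankel_det_succ_eq_resultant (n m N : ℕ) (hN : N = m + n + 1)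
    (p q : Polynomial ℂ) (hpdeg : p.natDegree = n) (hqdeg : q.natDegree = m)
    (hp0 : p.leadingCoeff ≠ 0) (hq0 : q.leadingCoeff ≠ 0)
    (x : Fin N → ℂ) (hx : Function.Injective x)
    (hpx : ∀ j, p.eval (x j) ≠ 0) (hqx : ∀ j, q.eval (x j) ≠ 0)
    (t : ℕ → ℂ)
    (ht : ∀ k, t k = ∑ j, (q.eval (x j) / p.eval (x j)) * x j ^ k / Wd x j) :
    Hdet t (n + 1) = q.leadingCoeff / p.leadingCoeff * Hdet t n ∧
    Hdet t (n + 1) =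
      (-1 : ℂ) ^ (m * n + n * (n + 1) / 2) * q.leadingCoeff /
          (∏ j, p.eval (x j)) * Res p q :=
  hankel_det_succ_eq_resultant_general n m N hN p q hpdeg hqdeg hp0 x hx hpx t ht
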